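/- arXiv:2406.00849 — 4 statements merged into one kernel-verified Lean document; each statement's English description precedes it below -/
import Mathlib

section
/- Eneström–Kakeya theorem (lower bound part): if P(z) = a_0 + a_1 z + ... + a_n z^n is a polynomial with all coefficients a_k positive real numbers, then every complex root z of P satisfies |z| ≥ min over 1 ≤ k ≤ n of a_{k-1}/a_k. -/
/-!
Put `β = min a_{k-1}/a_k`, so that `a_k - β a_{k+1} ≥ 0`. Multiplying `P` by `β - z` gives
`(β - z) P(z) = β a_0 - R(z)` with `R(z) = ∑_{k<n} (a_k - β a_{k+1}) z^{k+1} + a_n z^{n+1}`,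
a polynomial with nonnegative coefficients. At `z = β` this yields `R(β) = β a_0`; at a root `z`
it yields `R(z) = β a_0`. If `|z| < β`, then `|R(z)| ≤ R(|z|) < R(β) = β a_0`, a contradiction.
-/

open Finset

namespace EnestroemKakeya

def remainder {R : Type*} [CommRing R] (a : ℕ → R) (β z : R) (n : ℕ) : R :=
  ∑ k ∈ range n, (a k - β * a (k + 1)) * z ^ (k + 1) + a n * z ^ (n + 1)

theorem sub_mul_sum_range_pow {R : Type*} [CommRing R] (a : ℕ → R) (β z : R) (n : ℕ) :
    (β - z) * ∑ k ∈ range (n + 1), a k * z ^ k = β * a 0 - remainder a β z n := by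
  induction n with
  | zero => simp only [remainder, zero_add, sum_range_one, sum_range_zero]; ring
  | succ n ih =>
    rw [sum_range_succ, mul_add, ih]
    simp only [remainder, sum_range_succ]
    ring

theorem remainder_self (a : ℕ → ℝ) (β : ℝ) (n : ℕ) : remainder a β β n = β * a 0 := by
  have h := sub_mul_sum_range_pow a β β n
  rw [sub_self, zero_mul] at h
  linarith

theorem norm_remainder_le (a : ℕ → ℝ) (β : ℝ) (n : ℕ) (hβ : ∀ k < n, β * a (k + 1) ≤ a k)
    (han : 0 ≤ a n) (z : ℂ) :
    ‖remainder (fun k => (a k : ℂ)) β z n‖ ≤ remainder a β ‖z‖ n := by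
  unfold remainder
  refine (norm_add_le _ _).trans (add_le_add ((norm_sum_le _ _).trans_eq ?_) ?_)
  · refine sum_congr rfl fun k hk => ?_
    rw [← Complex.ofReal_mul, ← Complex.ofReal_sub, norm_mul, norm_pow, Complex.norm_real,
      Real.norm_of_nonneg (sub_nonneg.mpr (hβ k (mem_range.mp hk)))]
  · rw [norm_mul, norm_pow, Complex.norm_real, Real.norm_of_nonneg han]

theorem remainder_lt_remainder (a : ℕ → ℝ) {r β : ℝ} (n : ℕ)
    (hβ : ∀ k < n, β * a (k + 1) ≤ a k) (han : 0 < a n) (hr : 0 ≤ r) (hrβ : r < β) :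
    remainder a β r n < remainder a β β n := by
  unfold remainder
  refine add_lt_add_of_le_of_lt (sum_le_sum fun k hk => ?_) ?_
  · exact mul_le_mul_of_nonneg_left (pow_le_pow_left₀ hr hrβ.le _)
      (sub_nonneg.mpr (hβ k (mem_range.mp hk)))
  · exact mul_lt_mul_of_pos_left (pow_lt_pow_left₀ hrβ hr (Nat.succ_ne_zero n)) han

theorem sum_mul_pow_ne_zero_of_norm_lt (a : ℕ → ℝ) (β : ℝ) (n : ℕ)
    (hβ : ∀ k < n, β * a (k + 1) ≤ a k) (han : 0 < a n) {z : ℂ} (hz : ‖z‖ < β) :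
    ∑ k ∈ range (n + 1), (a k : ℂ) * z ^ k ≠ 0 := by
  intro hroot
  have hR : remainder (fun k => (a k : ℂ)) β z n = (β * a 0 : ℝ) := by
    have h := sub_mul_sum_range_pow (fun k => (a k : ℂ)) β z n
    rw [hroot, mul_zero] at h
    push_cast
    linear_combination h
  have : |β * a 0| < β * a 0 := calc
    |β * a 0| = ‖remainder (fun k => (a k : ℂ)) β z n‖ := by
      rw [hR, Complex.norm_real, Real.norm_eq_abs]
    _ ≤ remainder a β ‖z‖ n := norm_remainder_le a β n hβ han.le z
    _ < remainder a β β n := remainder_lt_remainder a n hβ han (norm_nonneg z) hz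
    _ = β * a 0 := remainder_self a β n
  exact (le_abs_self _).not_gt this

end EnestroemKakeya

theorem enestroem_kakeya_lower (n : ℕ) (hn : 1 ≤ n) (a : ℕ → ℝ)
    (ha : ∀ k ≤ n, 0 < a k) (z : ℂ)
    (hz : ∑ k ∈ Finset.range (n + 1), (a k : ℂ) * z ^ k = 0) :
    ‖z‖ ≥ (Finset.Icc 1 n).inf' (Finset.nonempty_Icc.mpr hn)
      (fun k => a (k - 1) / a k) := by
  set β := (Finset.Icc 1 n).inf' (Finset.nonempty_Icc.mpr hn) (fun k => a (k - 1) / a k)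
  have hβ : ∀ k < n, β * a (k + 1) ≤ a k := fun k hk =>
    (le_div_iff₀ (ha (k + 1) hk)).mp
      (inf'_le (fun k => a (k - 1) / a k) (mem_Icc.mpr ⟨by omega, hk⟩))
  by_contra! hlt
  exact EnestroemKakeya.sum_mul_pow_ne_zero_of_norm_lt a β n hβ (ha n le_rfl) hlt hz
end

section
/- Eneström–Kakeya theorem (upper bound part): if P(z) = a_0 + a_1 z + ... + a_n z^n is a polynomial with all coefficients a_k positive real numbers, then every complex root z of P satisfies |z| ≤ max over 1 ≤ k ≤ n of a_{k-1}/a_k. -/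
/-!
Rescaling `z = β w` with `β = max a_{k-1}/a_k` turns `P` into `∑ b_k w^k` with
`b_k = a_k β^k` nondecreasing, so it suffices to show that such a polynomial has no root
with `|w| > 1`. Multiplying by `1 - w` gives
`b_n w^{n+1} = b_0 + ∑ (b_{k+1} - b_k) w^{k+1}` at a root, and for `|w| ≥ 1` the right side
has norm at most `(b_0 + ∑ (b_{k+1} - b_k)) |w|^n = b_n |w|^n`, whence `|w| ≤ 1`.
-/

open Finset

theorem one_sub_mul_sum_range_eq {R : Type*} [CommRing R] (b : ℕ → R) (w : R) (n : ℕ) :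
    (1 - w) * ∑ k ∈ range (n + 1), b k * w ^ k =
      b 0 + ∑ k ∈ range n, (b (k + 1) - b k) * w ^ (k + 1) - b n * w ^ (n + 1) := by
  induction n with
  | zero => simp; ring
  | succ n ih =>
    rw [sum_range_succ, mul_add, ih, sum_range_succ]
    ring

theorem norm_le_one_of_sum_eq_zero_of_monotone (n : ℕ) (b : ℕ → ℝ) (hb₀ : 0 ≤ b 0)
    (hb_mono : ∀ k < n, b k ≤ b (k + 1)) (hbn : 0 < b n) (w : ℂ)
    (hw : ∑ k ∈ range (n + 1), (b k : ℂ) * w ^ k = 0) :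
    ‖w‖ ≤ 1 := by
  by_contra! hw_gt
  set r := ‖w‖
  have h_step : ∀ k ∈ range n, 0 ≤ b (k + 1) - b k := fun k hk =>
    sub_nonneg.mpr (hb_mono k (mem_range.mp hk))
  have h_lead : (b n : ℂ) * w ^ (n + 1) =
      b 0 + ∑ k ∈ range n, (b (k + 1) - b k : ℂ) * w ^ (k + 1) := by
    have := one_sub_mul_sum_range_eq (fun k => (b k : ℂ)) w n
    rw [hw, mul_zero] at this
    linear_combination this
  have h_bound : b n * r ^ (n + 1) ≤ b n * r ^ n :=
    calc b n * r ^ (n + 1) = ‖(b n : ℂ) * w ^ (n + 1)‖ := by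
          rw [norm_mul, norm_pow, Complex.norm_of_nonneg hbn.le]
      _ ≤ b 0 + ∑ k ∈ range n, (b (k + 1) - b k) * r ^ (k + 1) := by
          rw [h_lead]
          refine (norm_add_le _ _).trans (add_le_add (Complex.norm_of_nonneg hb₀).le ?_)
          refine (norm_sum_le _ _).trans (sum_le_sum fun k hk => ?_)
          rw [norm_mul, norm_pow, ← Complex.ofReal_sub,
            Complex.norm_of_nonneg (h_step k hk)]
      _ ≤ b 0 * r ^ n + ∑ k ∈ range n, (b (k + 1) - b k) * r ^ n := by
          gcongr with k hk
          · exact le_mul_of_one_le_right hb₀ (one_le_pow₀ hw_gt.le)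
          · exact h_step k hk
          · exact hw_gt.le
          · exact mem_range.mp hk
      _ = b n * r ^ n := by
          rw [← sum_mul, sum_range_sub (fun k => b k), ← add_mul, add_sub_cancel]
  rw [pow_succ, ← mul_assoc] at h_bound
  have hr_pos : 0 < r := one_pos.trans hw_gt
  exact hw_gt.not_ge ((mul_le_iff_le_one_right (mul_pos hbn (pow_pos hr_pos n))).mp h_bound)

theorem enestroem_kakeya_upper (n : ℕ) (hn : 1 ≤ n) (a : ℕ → ℝ)
    (ha : ∀ k ≤ n, 0 < a k) (z : ℂ)
    (hz : ∑ k ∈ Finset.range (n + 1), (a k : ℂ) * z ^ k = 0) :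
    ‖z‖ ≤ (Finset.Icc 1 n).sup' (Finset.nonempty_Icc.mpr hn)
      (fun k => a (k - 1) / a k) := by
  set β := (Icc 1 n).sup' (nonempty_Icc.mpr hn) (fun k => a (k - 1) / a k)
  have h_ratio : ∀ k < n, a k ≤ β * a (k + 1) := fun k hk => by
    have := le_sup' (fun k => a (k - 1) / a k)
      (mem_Icc.mpr ⟨k.succ_pos, hk⟩ : k + 1 ∈ Icc 1 n)
    rwa [Nat.add_sub_cancel, div_le_iff₀ (ha _ hk)] at this
  have hβ : 0 < β := pos_of_mul_pos_left ((ha 0 n.zero_le).trans_le (h_ratio 0 hn)) (ha 1 hn).le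
  have h_scaled := norm_le_one_of_sum_eq_zero_of_monotone n (fun k => a k * β ^ k)
    (by simpa using (ha 0 n.zero_le).le)
    (fun k hk => by
      rw [pow_succ, mul_comm (β ^ k), ← mul_assoc, mul_comm (a (k + 1))]
      exact mul_le_mul_of_nonneg_right (h_ratio k hk) (by positivity))
    (mul_pos (ha n le_rfl) (by positivity)) (z / β) (by
      rw [← hz]
      refine sum_congr rfl fun k _ => ?_
      have : (β : ℂ) ≠ 0 := by exact_mod_cast hβ.ne'
      push_cast
      rw [div_pow, mul_assoc, mul_div_cancel₀ _ (pow_ne_zero k this)])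
  rwa [norm_div, Complex.norm_of_nonneg hβ.le, div_le_one hβ] at h_scaled
end

section
/- Let y be a real polynomial of degree n ≥ 2 all of whose zeros are real, and let τ be its largest zero, with τ > 0. Then for every q with 0 ≤ q ≤ n−2, the product y^{(q+2)}(τ) · y^{(q+1)}(τ) is strictly positive. -/
/-!
Real-rootedness passes from `p` to `p'` by Rolle's theorem, and for a split nonconstant `p` the
identity `p'(x) / p(x) = ∑ 1 / (x - r)` over the roots gives `p'(x) p(x) > 0` to the right of all
roots. Hence `y'` has no zero `> τ`, nor at `τ` since `τ` is a simple root; by the same argument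
every `y^(k)` with `k ≥ 1` has all its zeros `< τ`, and the claim is the inequality for
`p = y^(q+1)` at `τ`.
-/

namespace Polynomial

theorem natDegree_iterate_derivative_eq {R : Type*} [Semiring R] [IsAddTorsionFree R]
    (p : R[X]) (k : ℕ) : (Polynomial.derivative^[k] p).natDegree = p.natDegree - k := by
  induction k with
  | zero => simp
  | succ k ih => rw [Function.iterate_succ_apply', natDegree_derivative, ih, Nat.sub_sub]

namespace Splits

variable {p : ℝ[X]}

theorem derivative (hp : p.Splits) : p.derivative.Splits := by
  rw [splits_iff_card_roots] at hp ⊢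
  have h_rolle := card_roots_le_derivative p
  have h_card := card_roots' p.derivative
  rw [natDegree_derivative] at h_card ⊢
  omega

theorem eval_derivative_mul_eval_pos (hp : p.Splits) (hdeg : p.natDegree ≠ 0) {x : ℝ}
    (hx : ∀ r ∈ p.roots, r < x) : 0 < p.derivative.eval x * p.eval x := by
  have hp0 : p ≠ 0 := by rintro rfl; simp at hdeg
  have hpx : p.eval x ≠ 0 := fun h => (hx x ((mem_roots hp0).mpr h)).false
  obtain ⟨r, hr⟩ := Multiset.exists_mem_of_ne_zero (hp.roots_ne_zero hdeg)
  have hterm_pos : ∀ a ∈ p.roots.map fun z => 1 / (x - z), 0 < a := by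
    simp only [Multiset.mem_map, forall_exists_index, and_imp, forall_apply_eq_imp_iff₂]
    exact fun z hz => one_div_pos.mpr (sub_pos.mpr (hx z hz))
  have hr_mem := Multiset.mem_map_of_mem (fun z => 1 / (x - z)) hr
  have hsum_pos : 0 < (p.roots.map fun z => 1 / (x - z)).sum :=
    (hterm_pos _ hr_mem).trans_le
      (Multiset.single_le_sum (fun a ha => (hterm_pos a ha).le) _ hr_mem)
  rw [hp.eval_derivative_eq_eval_mul_sum hpx, mul_right_comm]
  exact mul_pos (mul_self_pos.mpr hpx) hsum_pos

theorem roots_derivative_lt (hp : p.Splits) {x : ℝ} (hle : ∀ r ∈ p.roots, r ≤ x)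
    (hx : p.roots.count x ≤ 1) : ∀ s ∈ p.derivative.roots, s < x := by
  intro s hs
  by_contra! hxs
  have hp' : p.derivative ≠ 0 := ne_zero_of_mem_roots hs
  have hp0 : p ≠ 0 := by rintro rfl; simp at hp'
  have hs' : p.derivative.IsRoot s := isRoot_of_mem_roots hs
  by_cases hps : p.IsRoot s
  · have hsx : s = x := le_antisymm (hle s ((mem_roots hp0).mpr hps)) hxs
    have hmult := (one_lt_rootMultiplicity_iff_isRoot hp0).mpr ⟨hps, hs'⟩
    rw [← count_roots, hsx] at hmult
    omega
  · have hlt : ∀ r ∈ p.roots, r < s := fun r hr =>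
      lt_of_le_of_ne ((hle r hr).trans hxs) fun hrs => hps (hrs ▸ isRoot_of_mem_roots hr)
    have hpos := hp.eval_derivative_mul_eval_pos (mt derivative_eq_zero.mpr hp') hlt
    rw [hs'.eq_zero, zero_mul] at hpos
    exact hpos.false

theorem iterate_derivative_of_roots_lt (hp : p.Splits) {x : ℝ} (hx : ∀ r ∈ p.roots, r < x)
    (k : ℕ) :
    (Polynomial.derivative^[k] p).Splits ∧ ∀ r ∈ (Polynomial.derivative^[k] p).roots, r < x :=
  Function.Iterate.rec (motive := fun f : ℝ[X] => f.Splits ∧ ∀ r ∈ f.roots, r < x) ⟨hp, hx⟩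
    (fun _ ⟨hf, hfx⟩ => ⟨hf.derivative, hf.roots_derivative_lt (fun r hr => (hfx r hr).le)
      ((Multiset.count_eq_zero.mpr fun hmem => (hfx x hmem).false).trans_le zero_le_one)⟩) k

end Splits

end Polynomial

theorem derivative_product_positive_at_largest_zero_general (n : ℕ) (hn : 2 ≤ n)
    (y : Polynomial ℝ) (hdeg : y.natDegree = n)
    (hroots : Multiset.card y.roots = n) (hsimple : y.roots.Nodup)
    (τ : ℝ) (hτ : IsGreatest {x : ℝ | Polynomial.eval x y = 0} τ)
    (q : ℕ) (hq : q ≤ n - 2) :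
    0 < Polynomial.eval τ (Polynomial.derivative^[q + 2] y) *
        Polynomial.eval τ (Polynomial.derivative^[q + 1] y) := by
  have hy : y.Splits := Polynomial.splits_iff_card_roots.mpr (hroots.trans hdeg.symm)
  have hy' : ∀ s ∈ y.derivative.roots, s < τ :=
    hy.roots_derivative_lt (fun r hr => hτ.2 (Polynomial.isRoot_of_mem_roots hr))
      (Multiset.nodup_iff_count_le_one.mp hsimple τ)
  obtain ⟨hsplit, hlt⟩ := hy.derivative.iterate_derivative_of_roots_lt hy' q
  rw [← Function.iterate_succ_apply] at hsplit hlt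
  have hdeg' : (Polynomial.derivative^[q + 1] y).natDegree ≠ 0 := by
    rw [Polynomial.natDegree_iterate_derivative_eq, hdeg]
    omega
  rw [Function.iterate_succ_apply']
  exact hsplit.eval_derivative_mul_eval_pos hdeg' hlt

theorem derivative_product_positive_at_largest_zero (n : ℕ) (hn : 2 ≤ n)
    (y : Polynomial ℝ) (hdeg : y.natDegree = n)
    (hroots : Multiset.card y.roots = n) (hsimple : y.roots.Nodup)
    (τ : ℝ) (hτ : IsGreatest {x : ℝ | Polynomial.eval x y = 0} τ) (hτpos : 0 < τ)
    (q : ℕ) (hq : q ≤ n - 2) :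
    0 < Polynomial.eval τ (Polynomial.derivative^[q + 2] y) *
        Polynomial.eval τ (Polynomial.derivative^[q + 1] y) :=
  derivative_product_positive_at_largest_zero_general n hn y hdeg hroots hsimple τ hτ q hq
end

section
/- For n ≥ 5 a natural number and λ > −1/2 real, the quantity D = (20λ²+80λ+107) n²(n+2λ)² − 4(2λ+1)(20λ²+68λ+65) n(n+2λ) + 24(2λ+1)²(2λ+3)(2λ+4) satisfies D > (20λ²+80λ+107)[n(n+2λ) − 8(λ+2)]². -/
/-! Put `x = n(n + 2λ)` and `t = λ + 1/2`. The difference of the two sides is affine in `x`,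
`4c(λ)x + K(λ)`, with slope `c > 0`; since `x ≥ 25 + 10λ` for `n ≥ 5`, it is at least
`4c(λ)(25 + 10λ) + K(λ)`, a quartic all of whose coefficients in `t` are positive. -/

lemma cubic_pos_of_neg_half_le {lam : ℝ} (hlam : -1/2 ≤ lam) :
    0 < 40 * lam ^ 3 + 324 * lam ^ 2 + 870 * lam + 791 := by
  obtain ⟨t, ht, rfl⟩ : ∃ t : ℝ, 0 ≤ t ∧ lam = t - 1/2 := ⟨lam + 1/2, by linarith, by ring⟩
  have h : 40 * (t - 1/2) ^ 3 + 324 * (t - 1/2) ^ 2 + 870 * (t - 1/2) + 791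
      = 40 * t ^ 3 + 264 * t ^ 2 + 576 * t + 432 := by ring
  rw [h]
  positivity

lemma quartic_pos_of_neg_half_le {lam : ℝ} (hlam : -1/2 ≤ lam) :
    0 < 704 * lam ^ 4 + 8448 * lam ^ 3 + 37344 * lam ^ 2 + 72256 * lam + 51996 := by
  obtain ⟨t, ht, rfl⟩ : ∃ t : ℝ, 0 ≤ t ∧ lam = t - 1/2 := ⟨lam + 1/2, by linarith, by ring⟩
  have h : 704 * (t - 1/2) ^ 4 + 8448 * (t - 1/2) ^ 3 + 37344 * (t - 1/2) ^ 2
      + 72256 * (t - 1/2) + 51996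
      = 704 * t ^ 4 + 7040 * t ^ 3 + 25728 * t ^ 2 + 40896 * t + 24192 := by ring
  rw [h]
  positivity

lemma le_mul_add_two_mul_of_five_le {n lam : ℝ} (hn : 5 ≤ n) (hlam : -5 ≤ lam) :
    25 + 10 * lam ≤ n * (n + 2 * lam) := by
  nlinarith [mul_nonneg (sub_nonneg.2 hn) (by linarith : 0 ≤ n + 5 + 2 * lam)]

lemma quadratic_gt_of_le {lam x : ℝ} (hlam : -1/2 ≤ lam) (hx : 25 + 10 * lam ≤ x) :
    (20 * lam ^ 2 + 80 * lam + 107) * (x - 8 * (lam + 2)) ^ 2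
      < (20 * lam ^ 2 + 80 * lam + 107) * x ^ 2
        - 4 * (2 * lam + 1) * (20 * lam ^ 2 + 68 * lam + 65) * x
        + 24 * (2 * lam + 1) ^ 2 * (2 * lam + 3) * (2 * lam + 4) := by
  have hslope := mul_le_mul_of_nonneg_left hx (cubic_pos_of_neg_half_le hlam).le
  linear_combination 4 * hslope + quartic_pos_of_neg_half_le hlam

theorem D_lower_bound (n : ℕ) (hn : 5 ≤ n) (lam : ℝ) (hlam : -1/2 < lam) (D : ℝ)
    (hD : D = (20 * lam ^ 2 + 80 * lam + 107) * (n : ℝ) ^ 2 * ((n : ℝ) + 2 * lam) ^ 2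
      - 4 * (2 * lam + 1) * (20 * lam ^ 2 + 68 * lam + 65) * (n : ℝ) * ((n : ℝ) + 2 * lam)
      + 24 * (2 * lam + 1) ^ 2 * (2 * lam + 3) * (2 * lam + 4)) :
    D > (20 * lam ^ 2 + 80 * lam + 107) *
      ((n : ℝ) * ((n : ℝ) + 2 * lam) - 8 * (lam + 2)) ^ 2 := by
  have hx : 25 + 10 * lam ≤ (n : ℝ) * ((n : ℝ) + 2 * lam) :=
    le_mul_add_two_mul_of_five_le (by exact_mod_cast hn) (by linarith)
  rw [hD]
  linear_combination quadratic_gt_of_le hlam.le hx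
end
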